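/- Let ξ̂_1, ξ̂_2, … be i.i.d. Ξ-valued random variables with distribution P^c ∈ Δ_J, let P̂_N, r̂_N be the Bayesian center and radii built from the first N samples, and let V̂_N* denote the unique fixed point in 𝒱(S) of the robust Bellman operator with ambiguity set 𝔓(P̂_N, r̂_N), while V* is the unique fixed point of the true Bellman operator under P^c. Then under the stochastic optimal control setup with weight function w, ‖V̂_N* − V*‖_w → 0 almost surely as N → ∞. -/

import Mathlib

open Filter Topology MeasureTheory ProbabilityTheory

noncomputable section

/-- Number of observations among the first `N` samples equal to the `j`-th support point. -/
def sampleCount {Ω : Type*} {J : ℕ} (X : ℕ → Ω → Fin J) (j : Fin J) (N : ℕ) (ω : Ω) : ℕ :=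
  ((Finset.range N).filter (fun i => X i ω = j)).card

/-- Bayesian reference probability `p̂_{j,N} = (τ_{j,0} - 1 + Σ_{i<N} 1{ξ̂_i = ξ^j}) / (Σ_k τ_{k,0} - J + N)`. -/
def bayesCenter {Ω : Type*} {J : ℕ} (τ0 : Fin J → ℝ) (X : ℕ → Ω → Fin J)
    (N : ℕ) (ω : Ω) (j : Fin J) : ℝ :=
  (τ0 j - 1 + (sampleCount X j N ω : ℝ)) / (∑ k, τ0 k - J + N)

/-- Bayesian radius `r̂_{j,N} = z · sqrt( p̂_{j,N}(1 - p̂_{j,N}) / (Σ_k τ_{k,N} - J) )`. -/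
def bayesRadius {Ω : Type*} {J : ℕ} (τ0 : Fin J → ℝ) (z : ℝ) (X : ℕ → Ω → Fin J)
    (N : ℕ) (ω : Ω) (j : Fin J) : ℝ :=
  z * Real.sqrt (bayesCenter τ0 X N ω j * (1 - bayesCenter τ0 X N ω j) / (∑ k, τ0 k - J + N))

/-- Box-type ambiguity set `𝔓(P,r) = {Q ∈ Δ_J : P_j - r_j ≤ Q_j ≤ P_j + r_j ∀ j}`. -/
def boxSet (J : ℕ) (P r : Fin J → ℝ) : Set (Fin J → ℝ) :=
  {Q | Q ∈ stdSimplex ℝ (Fin J) ∧ ∀ j, P j - r j ≤ Q j ∧ Q j ≤ P j + r j}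

/-- Expectation of `h` under the probability vector `Q`. -/
def expec {J : ℕ} (Q h : Fin J → ℝ) : ℝ := ∑ j, Q j * h j

/-- Weighted sup norm `‖V‖_w = sup_{s ∈ S} |V s| / w s`. -/
noncomputable def wSupNorm {m : ℕ} (S : Set (Fin m → ℝ)) (w V : (Fin m → ℝ) → ℝ) : ℝ :=
  ⨆ s : S, |V (s : Fin m → ℝ)| / w (s : Fin m → ℝ)

/-- Distributionally robust Bellman operator. -/
noncomputable def robustBellman {J m n : ℕ} (A : Set (Fin n → ℝ)) (amb : Set (Fin J → ℝ))
    (C : (Fin m → ℝ) → (Fin n → ℝ) → Fin J → ℝ)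
    (g : (Fin m → ℝ) → (Fin n → ℝ) → Fin J → Fin m → ℝ)
    (γ : ℝ) (V : (Fin m → ℝ) → ℝ) (s : Fin m → ℝ) : ℝ :=
  ⨅ a : A, ⨆ Q : amb,
    expec (Q : Fin J → ℝ) (fun j => C s (a : Fin n → ℝ) j + γ * V (g s (a : Fin n → ℝ) j))

/-- True Bellman operator under the distribution `Pc`. -/
noncomputable def trueBellman {J m n : ℕ} (A : Set (Fin n → ℝ)) (Pc : Fin J → ℝ)
    (C : (Fin m → ℝ) → (Fin n → ℝ) → Fin J → ℝ)
    (g : (Fin m → ℝ) → (Fin n → ℝ) → Fin J → Fin m → ℝ)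
    (γ : ℝ) (V : (Fin m → ℝ) → ℝ) (s : Fin m → ℝ) : ℝ :=
  ⨅ a : A, expec Pc (fun j => C s (a : Fin n → ℝ) j + γ * V (g s (a : Fin n → ℝ) j))

/-- Policy-evaluation Bellman operator under the distribution `Pc`. -/
noncomputable def policyBellman {J m n : ℕ} (Pc : Fin J → ℝ)
    (C : (Fin m → ℝ) → (Fin n → ℝ) → Fin J → ℝ)
    (g : (Fin m → ℝ) → (Fin n → ℝ) → Fin J → Fin m → ℝ)
    (π : (Fin m → ℝ) → (Fin n → ℝ))
    (γ : ℝ) (V : (Fin m → ℝ) → ℝ) (s : Fin m → ℝ) : ℝ :=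
  expec Pc (fun j => C s (π s) j + γ * V (g s (π s) j))

/-! The robust Bellman operator with box `𝔓(P, r)` is a `γκ`-contraction in `‖·‖_w`, and on a
value function with `|V| ≤ M w` it differs from the true Bellman operator by at most
`(C̄ + γκM) ε w`, where `ε = Σ_j (|P_j - P^c_j| + r_j)`. Comparing the two fixed points in the
usual way gives `‖V̂_N* - V*‖_w ≤ (C̄ + γκM) ε_N / (1 - γκ)` with `M` a weighted bound for `V*`.
By the strong law of large numbers the empirical frequencies, hence `p̂_N`, converge to `P^c`
almost surely, while `r̂_N → 0`; so `ε_N → 0`. -/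

section SupInf

variable {ι : Type*} [Nonempty ι] {f g : ι → ℝ} {c : ℝ}

lemma ciSup_le_ciSup_add (hg : BddAbove (Set.range g)) (h : ∀ i, f i ≤ g i + c) :
    ⨆ i, f i ≤ (⨆ i, g i) + c :=
  ciSup_le fun i => (h i).trans (add_le_add_left (le_ciSup hg i) c)

lemma ciInf_le_ciInf_add (hf : BddBelow (Set.range f)) (h : ∀ i, f i ≤ g i + c) :
    ⨅ i, f i ≤ (⨅ i, g i) + c :=
  sub_le_iff_le_add.1 <| le_ciInf fun i => sub_le_iff_le_add.2 ((ciInf_le hf i).trans (h i))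

lemma abs_ciSup_sub_ciSup_le (hf : BddAbove (Set.range f)) (hg : BddAbove (Set.range g))
    (h : ∀ i, |f i - g i| ≤ c) : |(⨆ i, f i) - ⨆ i, g i| ≤ c :=
  abs_sub_le_iff.2
    ⟨sub_le_iff_le_add'.2 <| ciSup_le_ciSup_add hg fun i =>
        sub_le_iff_le_add'.1 (abs_sub_le_iff.1 (h i)).1,
      sub_le_iff_le_add'.2 <| ciSup_le_ciSup_add hf fun i =>
        sub_le_iff_le_add'.1 (abs_sub_le_iff.1 (h i)).2⟩

lemma abs_ciInf_sub_ciInf_le (hf : BddBelow (Set.range f)) (hg : BddBelow (Set.range g))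
    (h : ∀ i, |f i - g i| ≤ c) : |(⨅ i, f i) - ⨅ i, g i| ≤ c :=
  abs_sub_le_iff.2
    ⟨sub_le_iff_le_add'.2 <| ciInf_le_ciInf_add hf fun i =>
        sub_le_iff_le_add'.1 (abs_sub_le_iff.1 (h i)).1,
      sub_le_iff_le_add'.2 <| ciInf_le_ciInf_add hg fun i =>
        sub_le_iff_le_add'.1 (abs_sub_le_iff.1 (h i)).2⟩

end SupInf

lemma bddBelow_range_of_abs_le {ι : Type*} {f : ι → ℝ} {B : ℝ} (h : ∀ i, |f i| ≤ B) :
    BddBelow (Set.range f) :=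
  ⟨-B, by rintro _ ⟨i, rfl⟩; exact (abs_le.1 (h i)).1⟩

section Expectation

variable {J : ℕ}

lemma abs_expec_le {Q h : Fin J → ℝ} {B : ℝ} (hQ : Q ∈ stdSimplex ℝ (Fin J))
    (hh : ∀ j, |h j| ≤ B) : |expec Q h| ≤ B :=
  calc |expec Q h| ≤ ∑ j, |Q j * h j| := Finset.abs_sum_le_sum_abs _ _
    _ = ∑ j, Q j * |h j| := by simp only [abs_mul, abs_of_nonneg (hQ.1 _)]
    _ ≤ ∑ j, Q j * B := Finset.sum_le_sum fun j _ => mul_le_mul_of_nonneg_left (hh j) (hQ.1 j)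
    _ = B := by rw [← Finset.sum_mul, hQ.2, one_mul]

lemma expec_sub_expec_right (Q h h' : Fin J → ℝ) :
    expec Q h - expec Q h' = expec Q (fun j => h j - h' j) := by
  simp only [expec, ← Finset.sum_sub_distrib, mul_sub]

lemma abs_expec_sub_expec_left_le (Q Q' h : Fin J → ℝ) :
    |expec Q h - expec Q' h| ≤ ∑ j, |Q j - Q' j| * |h j| :=
  calc |expec Q h - expec Q' h| = |∑ j, (Q j - Q' j) * h j| := by
        simp only [expec, ← Finset.sum_sub_distrib, sub_mul]
    _ ≤ ∑ j, |Q j - Q' j| * |h j| := by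
        simpa only [abs_mul] using
          Finset.abs_sum_le_sum_abs (fun j => (Q j - Q' j) * h j) Finset.univ

lemma bddAbove_range_expec {amb : Set (Fin J → ℝ)} (hamb : amb ⊆ stdSimplex ℝ (Fin J))
    (h : Fin J → ℝ) : BddAbove (Set.range fun Q : amb => expec (Q : Fin J → ℝ) h) :=
  ⟨∑ j, |h j|, by
    rintro _ ⟨Q, rfl⟩
    exact (abs_le.1 (abs_expec_le (hamb Q.2) fun j =>
      Finset.single_le_sum (fun k _ => abs_nonneg (h k)) (Finset.mem_univ j))).2⟩

lemma abs_ciSup_expec_le {amb : Set (Fin J → ℝ)} (hamb : amb ⊆ stdSimplex ℝ (Fin J))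
    (hne : amb.Nonempty) {h : Fin J → ℝ} {B : ℝ} (hh : ∀ j, |h j| ≤ B) :
    |⨆ Q : amb, expec (Q : Fin J → ℝ) h| ≤ B := by
  obtain ⟨Q₀, hQ₀⟩ := hne
  have : Nonempty amb := ⟨⟨Q₀, hQ₀⟩⟩
  refine abs_le.2 ⟨?_, ciSup_le fun Q => (abs_le.1 (abs_expec_le (hamb Q.2) hh)).2⟩
  exact (abs_le.1 (abs_expec_le (hamb hQ₀) hh)).1.trans
    (le_ciSup (bddAbove_range_expec hamb h) ⟨Q₀, hQ₀⟩)

end Expectation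

section Box

variable {J : ℕ} {P r : Fin J → ℝ}

def boxDeviation (Pc P r : Fin J → ℝ) : ℝ := ∑ j, (|P j - Pc j| + r j)

lemma boxSet_subset_stdSimplex : boxSet J P r ⊆ stdSimplex ℝ (Fin J) := fun _ hQ => hQ.1

lemma mem_boxSet_self (hP : P ∈ stdSimplex ℝ (Fin J)) (hr : ∀ j, 0 ≤ r j) : P ∈ boxSet J P r :=
  ⟨hP, fun j => ⟨by linarith [hr j], by linarith [hr j]⟩⟩

lemma abs_sub_le_of_mem_boxSet {Q : Fin J → ℝ} (hQ : Q ∈ boxSet J P r) (Pc : Fin J → ℝ)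
    (j : Fin J) : |Q j - Pc j| ≤ |P j - Pc j| + r j :=
  calc |Q j - Pc j| ≤ |Q j - P j| + |P j - Pc j| := abs_sub_le _ _ _
    _ ≤ r j + |P j - Pc j| := by
      gcongr
      exact abs_sub_le_iff.2 ⟨by linarith [(hQ.2 j).2], by linarith [(hQ.2 j).1]⟩
    _ = |P j - Pc j| + r j := add_comm _ _

lemma boxDeviation_nonneg (Pc : Fin J → ℝ) (hr : ∀ j, 0 ≤ r j) : 0 ≤ boxDeviation Pc P r :=
  Finset.sum_nonneg fun j _ => add_nonneg (abs_nonneg _) (hr j)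

lemma abs_ciSup_boxSet_expec_sub_expec_le (hP : P ∈ stdSimplex ℝ (Fin J)) (hr : ∀ j, 0 ≤ r j)
    (Pc : Fin J → ℝ) {h : Fin J → ℝ} {B : ℝ} (hh : ∀ j, |h j| ≤ B) :
    |(⨆ Q : boxSet J P r, expec (Q : Fin J → ℝ) h) - expec Pc h| ≤ boxDeviation Pc P r * B := by
  have hPbox := mem_boxSet_self hP hr
  have : Nonempty (boxSet J P r) := ⟨⟨P, hPbox⟩⟩
  have hdev : ∀ Q ∈ boxSet J P r, |expec Q h - expec Pc h| ≤ boxDeviation Pc P r * B := by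
    intro Q hQ
    refine (abs_expec_sub_expec_left_le Q Pc h).trans ?_
    rw [boxDeviation, Finset.sum_mul]
    exact Finset.sum_le_sum fun j _ => mul_le_mul (abs_sub_le_of_mem_boxSet hQ Pc j) (hh j)
      (abs_nonneg _) (add_nonneg (abs_nonneg _) (hr j))
  refine abs_sub_le_iff.2 ⟨sub_le_iff_le_add'.2 <| ciSup_le fun Q => ?_, ?_⟩
  · exact sub_le_iff_le_add'.1 (abs_sub_le_iff.1 (hdev Q Q.2)).1
  · have := (abs_sub_le_iff.1 (hdev P hPbox)).2
    have := le_ciSup (bddAbove_range_expec boxSet_subset_stdSimplex h) ⟨P, hPbox⟩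
    linarith

end Box

section WeightedNorm

variable {m : ℕ} {S : Set (Fin m → ℝ)} {w V : (Fin m → ℝ) → ℝ}

lemma wSupNorm_nonneg (hw : ∀ s ∈ S, 0 ≤ w s) : 0 ≤ wSupNorm S w V :=
  Real.iSup_nonneg fun s => div_nonneg (abs_nonneg _) (hw s s.2)

lemma wSupNorm_le {c : ℝ} (hw : ∀ s ∈ S, 0 < w s) (hc : 0 ≤ c)
    (h : ∀ s ∈ S, |V s| ≤ c * w s) : wSupNorm S w V ≤ c :=
  Real.iSup_le (fun s => (div_le_iff₀ (hw s s.2)).2 (h s s.2)) hc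

lemma abs_le_wSupNorm_mul {M : ℝ} (hw : ∀ s ∈ S, 0 < w s) (hV : ∀ s ∈ S, |V s| ≤ M * w s)
    {s : Fin m → ℝ} (hs : s ∈ S) : |V s| ≤ wSupNorm S w V * w s := by
  have hbdd : BddAbove (Set.range fun s : S => |V s| / w s) :=
    ⟨M, by rintro _ ⟨s, rfl⟩; exact (div_le_iff₀ (hw s s.2)).2 (hV s s.2)⟩
  exact (div_le_iff₀ (hw s hs)).1 (le_ciSup hbdd ⟨s, hs⟩)

lemma exists_nonneg_weighted_bound (hw : ∀ s ∈ S, 0 ≤ w s)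
    (h : ∃ M, ∀ s ∈ S, |V s| ≤ M * w s) : ∃ M, 0 ≤ M ∧ ∀ s ∈ S, |V s| ≤ M * w s := by
  obtain ⟨M, hM⟩ := h
  exact ⟨max M 0, le_max_right _ _, fun s hs =>
    (hM s hs).trans (mul_le_mul_of_nonneg_right (le_max_left _ _) (hw s hs))⟩

end WeightedNorm

section Bellman

variable {J m n : ℕ} {S : Set (Fin m → ℝ)} {A : Set (Fin n → ℝ)}
  {C : (Fin m → ℝ) → (Fin n → ℝ) → Fin J → ℝ} {g : (Fin m → ℝ) → (Fin n → ℝ) → Fin J → Fin m → ℝ}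
  {γ : ℝ} {w : (Fin m → ℝ) → ℝ} {Cbar κ : ℝ}

lemma abs_comp_le_of_drift (hgS : ∀ s ∈ S, ∀ a ∈ A, ∀ j, g s a j ∈ S)
    (hdrift : ∀ s ∈ S, ∀ a ∈ A, ∀ j, w (g s a j) ≤ κ * w s)
    {V : (Fin m → ℝ) → ℝ} {M : ℝ} (hM : 0 ≤ M) (hV : ∀ s ∈ S, |V s| ≤ M * w s)
    {s : Fin m → ℝ} (hs : s ∈ S) {a : Fin n → ℝ} (ha : a ∈ A) (j : Fin J) :
    |V (g s a j)| ≤ κ * M * w s :=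
  calc |V (g s a j)| ≤ M * w (g s a j) := hV _ (hgS s hs a ha j)
    _ ≤ M * (κ * w s) := mul_le_mul_of_nonneg_left (hdrift s hs a ha j) hM
    _ = κ * M * w s := by ring

lemma abs_cost_add_le (hgS : ∀ s ∈ S, ∀ a ∈ A, ∀ j, g s a j ∈ S) (hγ0 : 0 ≤ γ)
    (hCb : ∀ s ∈ S, ∀ a ∈ A, ∀ j, |C s a j| ≤ Cbar * w s)
    (hdrift : ∀ s ∈ S, ∀ a ∈ A, ∀ j, w (g s a j) ≤ κ * w s)
    {V : (Fin m → ℝ) → ℝ} {M : ℝ} (hM : 0 ≤ M) (hV : ∀ s ∈ S, |V s| ≤ M * w s)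
    {s : Fin m → ℝ} (hs : s ∈ S) {a : Fin n → ℝ} (ha : a ∈ A) (j : Fin J) :
    |C s a j + γ * V (g s a j)| ≤ (Cbar + γ * κ * M) * w s :=
  calc |C s a j + γ * V (g s a j)| ≤ |C s a j| + γ * |V (g s a j)| := by
        simpa only [abs_mul, abs_of_nonneg hγ0] using abs_add_le (C s a j) (γ * V (g s a j))
    _ ≤ Cbar * w s + γ * (κ * M * w s) := by
        gcongr
        exacts [hCb s hs a ha j, abs_comp_le_of_drift hgS hdrift hM hV hs ha j]
    _ = (Cbar + γ * κ * M) * w s := by ring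

lemma abs_robustBellman_sub_le {amb : Set (Fin J → ℝ)} (hamb : amb ⊆ stdSimplex ℝ (Fin J))
    (hne : amb.Nonempty) (hA : A.Nonempty) (hgS : ∀ s ∈ S, ∀ a ∈ A, ∀ j, g s a j ∈ S)
    (hγ0 : 0 ≤ γ) (hCb : ∀ s ∈ S, ∀ a ∈ A, ∀ j, |C s a j| ≤ Cbar * w s)
    (hdrift : ∀ s ∈ S, ∀ a ∈ A, ∀ j, w (g s a j) ≤ κ * w s)
    {V V' : (Fin m → ℝ) → ℝ} {M M' D : ℝ} (hM : 0 ≤ M) (hV : ∀ s ∈ S, |V s| ≤ M * w s)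
    (hM' : 0 ≤ M') (hV' : ∀ s ∈ S, |V' s| ≤ M' * w s)
    (hD : 0 ≤ D) (hVV' : ∀ s ∈ S, |V s - V' s| ≤ D * w s) {s : Fin m → ℝ} (hs : s ∈ S) :
    |robustBellman A amb C g γ V s - robustBellman A amb C g γ V' s| ≤ γ * κ * D * w s := by
  have : Nonempty A := hA.to_subtype
  have : Nonempty amb := hne.to_subtype
  refine abs_ciInf_sub_ciInf_le
    (bddBelow_range_of_abs_le fun a => abs_ciSup_expec_le hamb hne fun j =>
      abs_cost_add_le hgS hγ0 hCb hdrift hM hV hs a.2 j)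
    (bddBelow_range_of_abs_le fun a => abs_ciSup_expec_le hamb hne fun j =>
      abs_cost_add_le hgS hγ0 hCb hdrift hM' hV' hs a.2 j)
    fun a => abs_ciSup_sub_ciSup_le (bddAbove_range_expec hamb _) (bddAbove_range_expec hamb _)
      fun Q => ?_
  rw [expec_sub_expec_right]
  refine abs_expec_le (hamb Q.2) fun j => ?_
  calc |C s a j + γ * V (g s a j) - (C s a j + γ * V' (g s a j))|
        = γ * |V (g s a j) - V' (g s a j)| := by
          rw [add_sub_add_left_eq_sub, ← mul_sub, abs_mul, abs_of_nonneg hγ0]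
    _ ≤ γ * (κ * D * w s) := by
          gcongr
          exact abs_comp_le_of_drift (V := fun x => V x - V' x) hgS hdrift hD hVV' hs a.2 j
    _ = γ * κ * D * w s := by ring

lemma abs_robustBellman_boxSet_sub_trueBellman_le {P r Pc : Fin J → ℝ}
    (hP : P ∈ stdSimplex ℝ (Fin J)) (hr : ∀ j, 0 ≤ r j) (hPc : Pc ∈ stdSimplex ℝ (Fin J))
    (hA : A.Nonempty) (hgS : ∀ s ∈ S, ∀ a ∈ A, ∀ j, g s a j ∈ S)
    (hγ0 : 0 ≤ γ) (hCb : ∀ s ∈ S, ∀ a ∈ A, ∀ j, |C s a j| ≤ Cbar * w s)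
    (hdrift : ∀ s ∈ S, ∀ a ∈ A, ∀ j, w (g s a j) ≤ κ * w s)
    {V : (Fin m → ℝ) → ℝ} {M : ℝ} (hM : 0 ≤ M) (hV : ∀ s ∈ S, |V s| ≤ M * w s)
    {s : Fin m → ℝ} (hs : s ∈ S) :
    |robustBellman A (boxSet J P r) C g γ V s - trueBellman A Pc C g γ V s| ≤
      (Cbar + γ * κ * M) * boxDeviation Pc P r * w s := by
  have : Nonempty A := hA.to_subtype
  have hcost := fun (a : A) j => abs_cost_add_le hgS hγ0 hCb hdrift hM hV hs a.2 j
  exact abs_ciInf_sub_ciInf_le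
    (bddBelow_range_of_abs_le fun a => abs_ciSup_expec_le boxSet_subset_stdSimplex
      ⟨P, mem_boxSet_self hP hr⟩ (hcost a))
    (bddBelow_range_of_abs_le fun a => abs_expec_le hPc (hcost a))
    fun a => (abs_ciSup_boxSet_expec_sub_expec_le hP hr Pc (hcost a)).trans_eq (by ring)

theorem wSupNorm_sub_le_of_fixedPoints {P r Pc : Fin J → ℝ}
    (hP : P ∈ stdSimplex ℝ (Fin J)) (hr : ∀ j, 0 ≤ r j) (hPc : Pc ∈ stdSimplex ℝ (Fin J))
    (hA : A.Nonempty) (hgS : ∀ s ∈ S, ∀ a ∈ A, ∀ j, g s a j ∈ S) (hγ0 : 0 ≤ γ)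
    (hw : ∀ s ∈ S, 0 < w s) (hCbar : 0 ≤ Cbar) (hκ : 0 ≤ κ)
    (hCb : ∀ s ∈ S, ∀ a ∈ A, ∀ j, |C s a j| ≤ Cbar * w s)
    (hdrift : ∀ s ∈ S, ∀ a ∈ A, ∀ j, w (g s a j) ≤ κ * w s) (hγκ : γ * κ < 1)
    {V Vstar : (Fin m → ℝ) → ℝ} {M M' : ℝ}
    (hM : 0 ≤ M) (hVstar : ∀ s ∈ S, |Vstar s| ≤ M * w s)
    (hVstarFix : ∀ s ∈ S, Vstar s = trueBellman A Pc C g γ Vstar s)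
    (hM' : 0 ≤ M') (hV : ∀ s ∈ S, |V s| ≤ M' * w s)
    (hVFix : ∀ s ∈ S, V s = robustBellman A (boxSet J P r) C g γ V s) :
    wSupNorm S w (fun s => V s - Vstar s) ≤
      (Cbar + γ * κ * M) * boxDeviation Pc P r / (1 - γ * κ) := by
  set D := wSupNorm S w (fun s => V s - Vstar s)
  have hD : 0 ≤ D := wSupNorm_nonneg fun s hs => (hw s hs).le
  have hVD : ∀ s ∈ S, |V s - Vstar s| ≤ D * w s := fun s hs =>
    abs_le_wSupNorm_mul (M := M' + M) hw (fun s hs => (abs_sub _ _).trans <| by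
      rw [add_mul]; exact add_le_add (hV s hs) (hVstar s hs)) hs
  have hKε : 0 ≤ (Cbar + γ * κ * M) * boxDeviation Pc P r :=
    mul_nonneg (by positivity) (boxDeviation_nonneg Pc hr)
  have hDle : D ≤ γ * κ * D + (Cbar + γ * κ * M) * boxDeviation Pc P r :=
    wSupNorm_le hw (add_nonneg (by positivity) hKε) fun s hs => by
      rw [hVFix s hs, hVstarFix s hs]
      calc _ ≤ |robustBellman A (boxSet J P r) C g γ V s -
              robustBellman A (boxSet J P r) C g γ Vstar s| +
            |robustBellman A (boxSet J P r) C g γ Vstar s - trueBellman A Pc C g γ Vstar s| :=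
            abs_sub_le _ _ _
        _ ≤ γ * κ * D * w s + (Cbar + γ * κ * M) * boxDeviation Pc P r * w s :=
            add_le_add
              (abs_robustBellman_sub_le boxSet_subset_stdSimplex ⟨P, mem_boxSet_self hP hr⟩ hA
                hgS hγ0 hCb hdrift hM' hV hM hVstar hD hVD hs)
              (abs_robustBellman_boxSet_sub_trueBellman_le hP hr hPc hA hgS hγ0 hCb hdrift hM
                hVstar hs)
        _ = _ := by ring
  rw [le_div_iff₀ (by linarith)]
  linarith

end Bellman

lemma identDistrib_of_measure_fiber_eq {Ω α : Type*} [MeasurableSpace Ω] [MeasurableSpace α]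
    [MeasurableSingletonClass α] [Countable α] {μ : Measure Ω} {Y Y' : Ω → α}
    (hY : Measurable Y) (hY' : Measurable Y') (h : ∀ a, μ {ω | Y ω = a} = μ {ω | Y' ω = a}) :
    IdentDistrib Y Y' μ μ :=
  ⟨hY.aemeasurable, hY'.aemeasurable, Measure.ext_of_singleton fun a => by
    rw [Measure.map_apply hY (measurableSet_singleton a),
      Measure.map_apply hY' (measurableSet_singleton a)]
    exact h a⟩

section Sampling

variable {Ω : Type*} {J : ℕ} {X : ℕ → Ω → Fin J}

lemma sum_sampleCount (N : ℕ) (ω : Ω) : ∑ j, sampleCount X j N ω = N := by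
  classical
  simpa [sampleCount] using
    (Finset.card_eq_sum_card_fiberwise (f := fun i => X i ω) (s := Finset.range N)
      (t := Finset.univ) fun i _ => Finset.mem_univ _).symm

lemma ae_tendsto_sampleCount_div [MeasurableSpace Ω] {μ : Measure Ω} [IsFiniteMeasure μ]
    (hmeas : ∀ i, Measurable (X i)) (hindep : iIndepFun X μ)
    (hident : ∀ i, IdentDistrib (X i) (X 0) μ μ) (j : Fin J) :
    ∀ᵐ ω ∂μ, Tendsto (fun N => (sampleCount X j N ω : ℝ) / N) atTop
      (𝓝 (μ.real {ω | X 0 ω = j})) := by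
  classical
  set f : Fin J → ℝ := ({j} : Set (Fin J)).indicator 1
  have hf : Measurable f := Measurable.of_discrete
  have hmean : ∫ ω, f (X 0 ω) ∂μ = μ.real {ω | X 0 ω = j} := by
    exact integral_indicator_one ((hmeas 0) (measurableSet_singleton j))
  have hslln := strong_law_ae_real (fun i ω => f (X i ω))
    ((integrable_const (1 : ℝ)).indicator ((hmeas 0) (measurableSet_singleton j)))
    (fun i i' hii' => (hindep.indepFun hii').comp hf hf) fun i => (hident i).comp hf
  filter_upwards [hslln] with ω hω
  rw [hmean] at hω
  refine hω.congr fun N => ?_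
  simp only [f, sampleCount, Finset.natCast_card_filter, Set.indicator_apply,
    Set.mem_singleton_iff, Pi.one_apply]

end Sampling

section Bayes

variable {Ω : Type*} {J : ℕ} {τ0 : Fin J → ℝ} {X : ℕ → Ω → Fin J}

lemma sum_sub_card_pos (hJ : 0 < J) (hτ0 : ∀ j, 1 < τ0 j) : 0 < ∑ k, τ0 k - J := by
  have : 0 < ∑ k, (τ0 k - 1) :=
    Finset.sum_pos (fun k _ => sub_pos.2 (hτ0 k)) ⟨⟨0, hJ⟩, Finset.mem_univ _⟩
  simpa [Finset.sum_sub_distrib] using this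

lemma bayesCenter_mem_stdSimplex (hτ0 : ∀ j, 1 < τ0 j) (hb : 0 < ∑ k, τ0 k - J) (N : ℕ)
    (ω : Ω) : bayesCenter τ0 X N ω ∈ stdSimplex ℝ (Fin J) := by
  have hden : (0 : ℝ) < ∑ k, τ0 k - J + N := by positivity
  refine ⟨fun j => div_nonneg (by linarith [hτ0 j, (sampleCount X j N ω).cast_nonneg (α := ℝ)])
    hden.le, ?_⟩
  unfold bayesCenter
  rw [← Finset.sum_div, div_eq_one_iff_eq hden.ne', Finset.sum_add_distrib,
    ← Nat.cast_sum, sum_sampleCount, Finset.sum_sub_distrib]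
  simp

lemma tendsto_bayesCenter {ω : Ω} {j : Fin J} {p : ℝ}
    (hfreq : Tendsto (fun N => (sampleCount X j N ω : ℝ) / N) atTop (𝓝 p)) :
    Tendsto (fun N => bayesCenter τ0 X N ω j) atTop (𝓝 p) := by
  have hlim := ((tendsto_const_div_atTop_nhds_zero_nat (τ0 j - 1)).add hfreq).div
    ((tendsto_const_div_atTop_nhds_zero_nat (∑ k, τ0 k - J)).add_const 1) (by norm_num)
  rw [zero_add, zero_add, div_one] at hlim
  refine hlim.congr' ((eventually_ne_atTop 0).mono fun N hN => ?_)
  have hN' : (N : ℝ) ≠ 0 := Nat.cast_ne_zero.2 hN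
  simp only [bayesCenter, Pi.div_apply]
  rw [← add_div, div_add_one hN', div_div_div_cancel_right₀ hN']

lemma tendsto_bayesRadius (z : ℝ) {ω : Ω} {j : Fin J} {p : ℝ}
    (hcenter : Tendsto (fun N => bayesCenter τ0 X N ω j) atTop (𝓝 p)) :
    Tendsto (fun N => bayesRadius τ0 z X N ω j) atTop (𝓝 0) := by
  have hden : Tendsto (fun N : ℕ => ∑ k, τ0 k - J + N) atTop atTop :=
    tendsto_atTop_add_const_left _ _ tendsto_natCast_atTop_atTop
  simpa [bayesRadius] using (((hcenter.mul (tendsto_const_nhds.sub hcenter)).div_atTop hden).sqrt).const_mul z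

end Bayes

lemma tendsto_boxDeviation {ι : Type*} {l : Filter ι} {J : ℕ} {P r : ι → Fin J → ℝ}
    {Pc : Fin J → ℝ} (hP : ∀ j, Tendsto (fun i => P i j) l (𝓝 (Pc j)))
    (hr : ∀ j, Tendsto (fun i => r i j) l (𝓝 0)) :
    Tendsto (fun i => boxDeviation Pc (P i) (r i)) l (𝓝 0) := by
  simpa [boxDeviation] using tendsto_finsetSum Finset.univ fun j _ => ((hP j).sub_const (Pc j)).abs.add (hr j)

theorem episodic_value_convergence_ae_general
    {Ω : Type*} [MeasurableSpace Ω] (μ : Measure Ω) [IsProbabilityMeasure μ]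
    (J m n : ℕ) (hJ : 2 ≤ J)
    (S : Set (Fin m → ℝ))
    (A : Set (Fin n → ℝ)) (hA : A.Nonempty)
    (C : (Fin m → ℝ) → (Fin n → ℝ) → Fin J → ℝ)
    (g : (Fin m → ℝ) → (Fin n → ℝ) → Fin J → Fin m → ℝ)
    (hgS : ∀ s ∈ S, ∀ a ∈ A, ∀ j, g s a j ∈ S)
    (γ : ℝ) (hγ0 : 0 ≤ γ)
    (w : (Fin m → ℝ) → ℝ) (hw1 : ∀ s ∈ S, 1 ≤ w s)
    (Cbar κ : ℝ) (hCbar0 : 0 < Cbar) (hκ0 : 0 ≤ κ)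
    (hCb : ∀ s ∈ S, ∀ a ∈ A, ∀ j, |C s a j| ≤ Cbar * w s)
    (hdrift : ∀ s ∈ S, ∀ a ∈ A, ∀ j, w (g s a j) ≤ κ * w s)
    (hγκ : γ * κ < 1)
    (Pc : Fin J → ℝ) (hPc : Pc ∈ stdSimplex ℝ (Fin J))
    (X : ℕ → Ω → Fin J) (hmeas : ∀ i, Measurable (X i))
    (hindep : iIndepFun X μ)
    (hident : ∀ i j, μ {ω | X i ω = j} = ENNReal.ofReal (Pc j))
    (τ0 : Fin J → ℝ) (hτ0 : ∀ j, 1 < τ0 j)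
    (z : ℝ) (hz : 0 < z)
    (Vstar : (Fin m → ℝ) → ℝ) (hVstarBd : ∃ M, ∀ s ∈ S, |Vstar s| ≤ M * w s)
    (hVstarFix : ∀ s ∈ S, Vstar s = trueBellman A Pc C g γ Vstar s)
    (Vhat : ℕ → Ω → (Fin m → ℝ) → ℝ)
    (hVhatBd : ∀ N ω, ∃ M, ∀ s ∈ S, |Vhat N ω s| ≤ M * w s)
    (hVhatFix : ∀ N ω, ∀ s ∈ S,
      Vhat N ω s =
        robustBellman A (boxSet J (bayesCenter τ0 X N ω) (bayesRadius τ0 z X N ω))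
          C g γ (Vhat N ω) s) :
    ∀ᵐ ω ∂μ,
      Tendsto (fun N => wSupNorm S w (fun s => Vhat N ω s - Vstar s)) atTop (𝓝 0) := by
  have hb : 0 < ∑ k, τ0 k - J := sum_sub_card_pos (by omega) hτ0
  have hw : ∀ s ∈ S, 0 < w s := fun s hs => one_pos.trans_le (hw1 s hs)
  obtain ⟨M, hM, hVstarM⟩ := exists_nonneg_weighted_bound (fun s hs => (hw s hs).le) hVstarBd
  have hXident (i : ℕ) : IdentDistrib (X i) (X 0) μ μ :=
    identDistrib_of_measure_fiber_eq (hmeas i) (hmeas 0) fun j => by rw [hident, hident]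
  have hfreq : ∀ᵐ ω ∂μ, ∀ j,
      Tendsto (fun N => (sampleCount X j N ω : ℝ) / N) atTop (𝓝 (Pc j)) :=
    ae_all_iff.2 fun j => by
      simpa [measureReal_def, hident 0 j, ENNReal.toReal_ofReal (hPc.1 j)] using
        ae_tendsto_sampleCount_div hmeas hindep hXident j
  filter_upwards [hfreq] with ω hω
  have hcenter (j : Fin J) := tendsto_bayesCenter (τ0 := τ0) (hω j)
  have hdev := tendsto_boxDeviation hcenter fun j => tendsto_bayesRadius z (hcenter j)
  refine squeeze_zero (fun N => wSupNorm_nonneg fun s hs => (hw s hs).le) (fun N => ?_)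
    (by simpa using (hdev.const_mul (Cbar + γ * κ * M)).div_const (1 - γ * κ))
  obtain ⟨M', hM', hVhatM'⟩ :=
    exists_nonneg_weighted_bound (fun s hs => (hw s hs).le) (hVhatBd N ω)
  exact wSupNorm_sub_le_of_fixedPoints (bayesCenter_mem_stdSimplex hτ0 hb N ω)
    (fun j => mul_nonneg hz.le (Real.sqrt_nonneg _)) hPc hA hgS hγ0 hw hCbar0.le hκ0 hCb hdrift
    hγκ hM hVstarM hVstarFix hM' hVhatM' (hVhatFix N ω)

/-- almost sure convergence of the episodic Bayesian DROC optimal value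
functions to the true optimal value function in the weighted sup norm. -/
theorem episodic_value_convergence_ae
    {Ω : Type*} [MeasurableSpace Ω] (μ : Measure Ω) [IsProbabilityMeasure μ]
    (J m n : ℕ) (hJ : 2 ≤ J)
    (S : Set (Fin m → ℝ)) (hS : S.Nonempty) (hScl : IsClosed S)
    (A : Set (Fin n → ℝ)) (hA : A.Nonempty) (hAcp : IsCompact A)
    (C : (Fin m → ℝ) → (Fin n → ℝ) → Fin J → ℝ)
    (g : (Fin m → ℝ) → (Fin n → ℝ) → Fin J → Fin m → ℝ)
    (hCcont : ∀ j, ContinuousOn (fun p : (Fin m → ℝ) × (Fin n → ℝ) => C p.1 p.2 j) (S ×ˢ A))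
    (hgcont : ∀ j, ContinuousOn (fun p : (Fin m → ℝ) × (Fin n → ℝ) => g p.1 p.2 j) (S ×ˢ A))
    (hgS : ∀ s ∈ S, ∀ a ∈ A, ∀ j, g s a j ∈ S)
    (γ : ℝ) (hγ0 : 0 ≤ γ) (hγ1 : γ < 1)
    (w : (Fin m → ℝ) → ℝ) (hw1 : ∀ s ∈ S, 1 ≤ w s) (hwcont : ContinuousOn w S)
    (Cbar κ : ℝ) (hCbar0 : 0 < Cbar) (hκ0 : 0 ≤ κ)
    (hCb : ∀ s ∈ S, ∀ a ∈ A, ∀ j, |C s a j| ≤ Cbar * w s)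
    (hdrift : ∀ s ∈ S, ∀ a ∈ A, ∀ j, w (g s a j) ≤ κ * w s)
    (hγκ : γ * κ < 1)
    (Pc : Fin J → ℝ) (hPc : Pc ∈ stdSimplex ℝ (Fin J))
    (X : ℕ → Ω → Fin J) (hmeas : ∀ i, Measurable (X i))
    (hindep : iIndepFun X μ)
    (hident : ∀ i j, μ {ω | X i ω = j} = ENNReal.ofReal (Pc j))
    (τ0 : Fin J → ℝ) (hτ0 : ∀ j, 1 < τ0 j)
    (z : ℝ) (hz : 0 < z)
    (Vstar : (Fin m → ℝ) → ℝ) (hVstarBd : ∃ M, ∀ s ∈ S, |Vstar s| ≤ M * w s)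
    (hVstarFix : ∀ s ∈ S, Vstar s = trueBellman A Pc C g γ Vstar s)
    (Vhat : ℕ → Ω → (Fin m → ℝ) → ℝ)
    (hVhatBd : ∀ N ω, ∃ M, ∀ s ∈ S, |Vhat N ω s| ≤ M * w s)
    (hVhatFix : ∀ N ω, ∀ s ∈ S,
      Vhat N ω s =
        robustBellman A (boxSet J (bayesCenter τ0 X N ω) (bayesRadius τ0 z X N ω))
          C g γ (Vhat N ω) s) :
    ∀ᵐ ω ∂μ,
      Tendsto (fun N => wSupNorm S w (fun s => Vhat N ω s - Vstar s)) atTop (𝓝 0) :=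
  episodic_value_convergence_ae_general μ J m n hJ S A hA C g hgS γ hγ0 w hw1 Cbar κ hCbar0 hκ0 hCb
    hdrift hγκ Pc hPc X hmeas hindep hident τ0 hτ0 z hz Vstar hVstarBd hVstarFix Vhat hVhatBd
    hVhatFix

end
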